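/- In the quaternions, define operations on a left module over the quaternion ring by a^b = j·a + (1+i)·b, a_b = −j·a + (1+i)·b, a^{b̄} = j·a + (1−i)·b, a_{b̄} = −j·a + (1−i)·b. Then the second biquandle axiom holds: for all a, b, applying the left (barred) pair of operations to the outputs (a^b, b_a) of the right pair recovers (a, b), i.e., a = (a^b)^{overline of (b_a)} and b = (b_a)_{overline of (a^b)}. -/

import Mathlib

/-!
Expanding, `(a^b)^{overline{b_a}} = (j² + (1-i)(1+i))·a + (j(1+i) - (1-i)j)·b`, and symmetrically
for the second component, so the axiom reduces to the three quaternion identities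
`j² = -1`, `(1-i)(1+i) = 2` and `j(1+i) = (1-i)j`.
-/

open Quaternion

noncomputable section

def qi : ℍ[ℚ] := ⟨0, 1, 0, 0⟩
def qj : ℍ[ℚ] := ⟨0, 0, 1, 0⟩

variable {M : Type} [AddCommGroup M] [Module ℍ[ℚ] M]

/-- a^b = j·a + (1+i)·b -/
def upR (a b : M) : M := qj • a + (1 + qi) • b
/-- a_b = −j·a + (1+i)·b -/
def dnR (a b : M) : M := -(qj • a) + (1 + qi) • b
/-- a^{b̄} = j·a + (1−i)·b -/
def upL (a b : M) : M := qj • a + (1 - qi) • b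
/-- a_{b̄} = −j·a + (1−i)·b -/
def dnL (a b : M) : M := -(qj • a) + (1 - qi) • b

section LinearBiquandle

variable {R N : Type*} [Ring R] [AddCommGroup N] [Module R N] {j u v : R}

theorem linear_biquandle_r2_fst (hj : j * j = -1) (hvu : v * u = 2) (hju : j * u = v * j)
    (a b : N) : j • (j • a + u • b) + v • (-(j • b) + u • a) = a := by
  calc j • (j • a + u • b) + v • (-(j • b) + u • a)
      = (j * j + v * u) • a + (j * u - v * j) • b := by
        simp only [smul_add, smul_neg, smul_smul, add_smul, sub_smul]; abel
    _ = a := by rw [hj, hvu, hju, sub_self, zero_smul, add_zero]; norm_num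

theorem linear_biquandle_r2_snd (hj : j * j = -1) (hvu : v * u = 2) (hju : j * u = v * j)
    (a b : N) : -(j • (-(j • b) + u • a)) + v • (j • a + u • b) = b := by
  calc -(j • (-(j • b) + u • a)) + v • (j • a + u • b)
      = (j * j + v * u) • b + (v * j - j * u) • a := by
        simp only [smul_add, smul_neg, smul_smul, add_smul, sub_smul]; abel
    _ = b := by rw [hj, hvu, hju, sub_self, zero_smul, add_zero]; norm_num

end LinearBiquandle

theorem qj_mul_qj : qj * qj = -1 := by
  ext <;> simp [re_mul, imI_mul, imJ_mul, imK_mul] <;> simp [qj]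

theorem one_sub_qi_mul_one_add_qi : (1 - qi) * (1 + qi) = 2 := by
  rw [← one_add_one_eq_two]
  ext <;> simp [re_mul, imI_mul, imJ_mul, imK_mul] <;> simp [qi]

theorem qj_mul_one_add_qi : qj * (1 + qi) = (1 - qi) * qj := by
  ext <;> simp [re_mul, imI_mul, imJ_mul, imK_mul] <;> simp [qi, qj]

/-- The second biquandle axiom for the quaternionic biquandle: for all a, b,
a = (a^b)^{overline{b_a}} and b = (b_a)_{overline{a^b}}. -/
theorem stmt_3 (a b : M) :
    upL (upR a b) (dnR b a) = a ∧ dnL (dnR b a) (upR a b) = b :=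
  ⟨linear_biquandle_r2_fst qj_mul_qj one_sub_qi_mul_one_add_qi qj_mul_one_add_qi a b,
    linear_biquandle_r2_snd qj_mul_qj one_sub_qi_mul_one_add_qi qj_mul_one_add_qi a b⟩

end
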